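/- arXiv:2604.17117 — 4 statements merged into one kernel-verified Lean document; each statement's English description precedes it below -/
import Mathlib

section
/- Let G be a finite abelian group and f, g : G → ℂ 1-bounded functions with ‖g‖_{U²(G)} ≤ δ for some δ ∈ (0, 1/2). Then |(f∗g)(x)| ≤ δ^{1/2} for all but at most δ|G| values of x ∈ G. -/
open Finset BigOperators Pointwise

section Defs
variable {G : Type} [AddCommGroup G] [Fintype G]

/-- Average of `f` over `G`. -/
noncomputable def expect (f : G → ℂ) : ℂ := (Fintype.card G : ℂ)⁻¹ * ∑ x, f x

/-- Fourier coefficient of `f` at the character `γ`. -/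
noncomputable def dft (f : G → ℂ) (γ : AddChar G ℂ) : ℂ :=
  expect (fun x => f x * (starRingEnd ℂ) (γ x))

/-- ℓ¹ norm of the Fourier transform of `f`. -/
noncomputable def l1Fourier (f : G → ℂ) : ℝ :=
  letI : Fintype (AddChar G ℂ) := Fintype.ofFinite _
  ∑ γ : AddChar G ℂ, ‖dft f γ‖

/-- `f` is 1-bounded. -/
def Bounded1 (f : G → ℂ) : Prop := ∀ x, ‖f x‖ ≤ 1

/-- Normalized L² norm. -/
noncomputable def l2norm (f : G → ℂ) : ℝ :=
  Real.sqrt ((Fintype.card G : ℝ)⁻¹ * ∑ x, ‖f x‖ ^ 2)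

/-- A growth function: increasing and positive on `ℝ_{>0}`. -/
def GrowthFn (F : ℝ → ℝ) : Prop :=
  MonotoneOn F (Set.Ioi 0) ∧ ∀ M > 0, 0 < F M

/-- `f` is 1-measurable with growth `F`. -/
def Meas1 (f : G → ℂ) (F : ℝ → ℝ) : Prop :=
  Bounded1 f ∧ ∀ M > 0, ∃ g : G → ℂ, Bounded1 g ∧ l1Fourier g ≤ F M ∧
    l2norm (fun x => f x - g x) ≤ M⁻¹

/-- Indicator of a set as a ℂ-valued function. -/
noncomputable def ind (E : Set G) : G → ℂ := fun x => Set.indicator E (fun _ => (1 : ℂ)) x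

/-- A set is 1-measurable with growth `F`. -/
def MeasSet1 (E : Set G) (F : ℝ → ℝ) : Prop := Meas1 (ind E) F

/-- Fourth power of the Gowers U²-norm. -/
noncomputable def u2Pow4 (f : G → ℂ) : ℝ :=
  ‖((Fintype.card G : ℂ))⁻¹ ^ 3 *
    ∑ x, ∑ h₁, ∑ h₂, f x * (starRingEnd ℂ) (f (x + h₁)) *
      (starRingEnd ℂ) (f (x + h₂)) * f (x + h₁ + h₂)‖

/-- Convolution of two functions. -/
noncomputable def conv (f g : G → ℂ) : G → ℂ :=
  fun x => expect (fun y => f y * g (x - y))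

end Defs

section Aux
variable {G : Type} [AddCommGroup G] [Fintype G]

noncomputable def acorr (g : G → ℂ) : G → ℂ :=
  fun t => ∑ x, g x * (starRingEnd ℂ) (g (x - t))

lemma cast_abs_sq (z : ℂ) : ((‖z‖ ^ 2 : ℝ) : ℂ) = z * (starRingEnd ℂ) z := by
  rw [Complex.mul_conj]; norm_cast; rw [Complex.sq_norm]

lemma acorr_sq_sum (g : G → ℂ) :
    ((∑ t, ‖acorr g t‖ ^ 2 : ℝ) : ℂ)
      = ∑ x, ∑ h₁, ∑ h₂, g x * (starRingEnd ℂ) (g (x + h₁)) *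
          (starRingEnd ℂ) (g (x + h₂)) * g (x + h₁ + h₂) := by
  have h1 : ((∑ t, ‖acorr g t‖ ^ 2 : ℝ) : ℂ)
      = ∑ t, acorr g t * (starRingEnd ℂ) (acorr g t) := by
    push_cast
    exact sum_congr rfl fun t _ => by rw [← Complex.ofReal_pow, cast_abs_sq]
  rw [h1]
  have h2 : ∀ t : G, acorr g t * (starRingEnd ℂ) (acorr g t)
      = ∑ x, ∑ x', g x * (starRingEnd ℂ) (g (x - t)) *
          ((starRingEnd ℂ) (g x') * g (x' - t)) := by
    intro t
    rw [acorr, map_sum, Finset.sum_mul_sum]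
    exact sum_congr rfl fun x _ => sum_congr rfl fun x' _ => by
      rw [map_mul, Complex.conj_conj]
  simp_rw [h2]
  rw [Finset.sum_comm]
  refine sum_congr rfl fun x _ => ?_
  rw [← Fintype.sum_equiv (Equiv.neg G)
      (fun h₁ => ∑ x', g x * (starRingEnd ℂ) (g (x - (-h₁))) *
        ((starRingEnd ℂ) (g x') * g (x' - (-h₁))))
      (fun t => ∑ x', g x * (starRingEnd ℂ) (g (x - t)) *
        ((starRingEnd ℂ) (g x') * g (x' - t))) (fun h₁ => rfl)]
  refine sum_congr rfl fun h₁ _ => ?_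
  rw [← Fintype.sum_equiv (Equiv.addLeft x)
      (fun h₂ => g x * (starRingEnd ℂ) (g (x - (-h₁))) *
        ((starRingEnd ℂ) (g (x + h₂)) * g (x + h₂ - (-h₁))))
      (fun x' => g x * (starRingEnd ℂ) (g (x - (-h₁))) *
        ((starRingEnd ℂ) (g x') * g (x' - (-h₁)))) (fun h₂ => rfl)]
  refine sum_congr rfl fun h₂ _ => ?_
  have e1 : x - (-h₁) = x + h₁ := by abel
  have e2 : x + h₂ - (-h₁) = x + h₁ + h₂ := by abel
  rw [e1, e2]; ring

lemma key (f g : G → ℂ) (δ : ℝ) (h0 : 0 ≤ δ)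
    (hf : Bounded1 f) (hg : Bounded1 g) (hU : u2Pow4 g ≤ δ ^ 4) :
    ∑ x, ‖conv f g x‖ ^ 2 ≤ δ ^ 2 * Fintype.card G := by
  set n : ℝ := (Fintype.card G : ℝ) with hn
  have hnpos : 0 < n := by
    simp only [hn]; exact_mod_cast Fintype.card_pos
  -- Step C : ∑ t |acorr|² = n³ * u2Pow4 g
  have stepC : ∑ t, ‖acorr g t‖ ^ 2 = n ^ 3 * u2Pow4 g := by
    have h := acorr_sq_sum g
    have : u2Pow4 g = (n ^ 3)⁻¹ * ∑ t, ‖acorr g t‖ ^ 2 := by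
      rw [u2Pow4, ← h, norm_mul, norm_pow, norm_inv, Complex.norm_natCast,
        Complex.norm_of_nonneg (by positivity), hn, inv_pow]
    rw [this, hn]
    field_simp
  -- Step B : Cauchy-Schwarz
  have stepB : (∑ t, ‖acorr g t‖) ^ 2 ≤ n * ∑ t, ‖acorr g t‖ ^ 2 := by
    have := sq_sum_le_card_mul_sum_sq (s := (univ : Finset G))
      (f := fun t => ‖acorr g t‖)
    simpa [hn] using this
  have hsum_acorr : ∑ t, ‖acorr g t‖ ≤ n ^ 2 * δ ^ 2 := by
    have h4 : (∑ t, ‖acorr g t‖) ^ 2 ≤ (n ^ 2 * δ ^ 2) ^ 2 := by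
      calc (∑ t, ‖acorr g t‖) ^ 2
          ≤ n * ∑ t, ‖acorr g t‖ ^ 2 := stepB
        _ = n * (n ^ 3 * u2Pow4 g) := by rw [stepC]
        _ ≤ n * (n ^ 3 * δ ^ 4) := by
            have := mul_le_mul_of_nonneg_left hU (le_of_lt (by positivity : (0:ℝ) < n ^ 3))
            exact mul_le_mul_of_nonneg_left this hnpos.le
        _ = (n ^ 2 * δ ^ 2) ^ 2 := by ring
    exact (pow_le_pow_iff_left₀ (by positivity) (by positivity) two_ne_zero).mp h4
  -- Step A : ∑ x |S x|² ≤ n * ∑ t |acorr t|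
  set S : G → ℂ := fun x => ∑ y, f y * g (x - y) with hS
  have expand : ((∑ x, ‖S x‖ ^ 2 : ℝ) : ℂ)
      = ∑ y, ∑ y', f y * (starRingEnd ℂ) (f y') * acorr g (y' - y) := by
    have h1 : ((∑ x, ‖S x‖ ^ 2 : ℝ) : ℂ)
        = ∑ x, S x * (starRingEnd ℂ) (S x) := by
      push_cast
      exact sum_congr rfl fun x _ => by rw [← Complex.ofReal_pow, cast_abs_sq]
    rw [h1]
    have h2 : ∀ x : G, S x * (starRingEnd ℂ) (S x)
        = ∑ y, ∑ y', f y * (starRingEnd ℂ) (f y') *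
            (g (x - y) * (starRingEnd ℂ) (g (x - y'))) := by
      intro x
      rw [hS, map_sum, Finset.sum_mul_sum]
      exact sum_congr rfl fun y _ => sum_congr rfl fun y' _ => by
        rw [map_mul]; ring
    simp_rw [h2]
    rw [Finset.sum_comm]
    refine sum_congr rfl fun y _ => ?_
    rw [Finset.sum_comm]
    refine sum_congr rfl fun y' _ => ?_
    rw [← Finset.mul_sum]
    congr 1
    rw [acorr, ← Fintype.sum_equiv (Equiv.subRight y)
        (fun x => g (x - y) * (starRingEnd ℂ) (g (x - y')))
        (fun u => g u * (starRingEnd ℂ) (g (u - (y' - y)))) (fun x => by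
          simp only [Equiv.subRight_apply]
          have : x - y' = x - y - (y' - y) := by abel
          rw [this])]
  have stepA : ∑ x, ‖S x‖ ^ 2 ≤ n * ∑ t, ‖acorr g t‖ := by
    have h1 : ∑ x, ‖S x‖ ^ 2
        = ‖((∑ x, ‖S x‖ ^ 2 : ℝ) : ℂ)‖ := by
      rw [Complex.norm_of_nonneg (by positivity)]
    rw [h1, expand]
    calc ‖∑ y, ∑ y', f y * (starRingEnd ℂ) (f y') * acorr g (y' - y)‖
        ≤ ∑ y, ∑ y', ‖f y * (starRingEnd ℂ) (f y') * acorr g (y' - y)‖ := by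
          refine (norm_sum_le _ _).trans (sum_le_sum fun y _ => norm_sum_le _ _)
      _ ≤ ∑ y, ∑ y', ‖acorr g (y' - y)‖ := by
          refine sum_le_sum fun y _ => sum_le_sum fun y' _ => ?_
          rw [norm_mul, norm_mul, Complex.norm_conj]
          calc ‖f y‖ * ‖f y'‖ * ‖acorr g (y' - y)‖
              ≤ 1 * 1 * ‖acorr g (y' - y)‖ := by
                gcongr <;> [exact hf y; exact hf y']
            _ = ‖acorr g (y' - y)‖ := by ring
      _ = ∑ y : G, ∑ t, ‖acorr g t‖ := by
          refine sum_congr rfl fun y _ => ?_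
          exact Fintype.sum_equiv (Equiv.subRight y) _ _ (fun y' => rfl)
      _ = n * ∑ t, ‖acorr g t‖ := by
          rw [Finset.sum_const, card_univ, nsmul_eq_mul, hn]
  -- combine
  have hconv : ∀ x, ‖conv f g x‖ ^ 2 = n⁻¹ ^ 2 * ‖S x‖ ^ 2 := by
    intro x
    rw [conv, _root_.expect, norm_mul, norm_inv, Complex.norm_natCast, mul_pow, hS, hn]
  calc ∑ x, ‖conv f g x‖ ^ 2
      = n⁻¹ ^ 2 * ∑ x, ‖S x‖ ^ 2 := by
        rw [Finset.mul_sum]; exact sum_congr rfl fun x _ => hconv x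
    _ ≤ n⁻¹ ^ 2 * (n * (n ^ 2 * δ ^ 2)) := by
        gcongr
        exact stepA.trans (by gcongr)
    _ = δ ^ 2 * n := by field_simp

end Aux

/-- Counting lemma: if `f, g` are 1-bounded and `‖g‖_{U²(G)} ≤ δ`, then
`|(f∗g)(x)| ≤ δ^{1/2}` for all but at most `δ|G|` values of `x`. -/
theorem counting_lemma {G : Type} [AddCommGroup G] [Fintype G]
    (f g : G → ℂ) (δ : ℝ) (h0 : 0 < δ) (h1 : δ < 1 / 2)
    (hf : Bounded1 f) (hg : Bounded1 g) (hU : u2Pow4 g ≤ δ ^ 4) :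
    ({x : G | Real.sqrt δ < ‖conv f g x‖}.ncard : ℝ)
      ≤ δ * Fintype.card G := by
  
  classical
  set n : ℝ := (Fintype.card G : ℝ) with hn
  have hkey := key f g δ h0.le hf hg hU
  set B : Finset G := Finset.filter (fun x => Real.sqrt δ < ‖conv f g x‖) univ
    with hB
  have hncard : ({x : G | Real.sqrt δ < ‖conv f g x‖}.ncard : ℝ)
      = (B.card : ℝ) := by
    rw [Set.ncard_eq_toFinset_card']
    congr 1
    rw [hB]
    simp [Set.toFinset_setOf]
  have hle : (B.card : ℝ) * δ ≤ ∑ x, ‖conv f g x‖ ^ 2 := by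
    calc (B.card : ℝ) * δ = ∑ _x ∈ B, δ := by rw [sum_const, nsmul_eq_mul]
      _ ≤ ∑ x ∈ B, ‖conv f g x‖ ^ 2 := by
          refine sum_le_sum fun x hx => ?_
          have hx' : Real.sqrt δ < ‖conv f g x‖ := by
            simpa [hB] using hx
          have h2 := pow_le_pow_left₀ (Real.sqrt_nonneg δ) hx'.le 2
          rwa [Real.sq_sqrt h0.le] at h2
      _ ≤ ∑ x, ‖conv f g x‖ ^ 2 :=
          sum_le_sum_of_subset_of_nonneg (subset_univ B) (fun x _ _ => by positivity)
  rw [hncard]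
  have hfin : (B.card : ℝ) * δ ≤ δ ^ 2 * n := hle.trans hkey
  nlinarith [hfin, h0]
end

section
/- Let G be a finite abelian group, A ⊆ G, and ε ∈ (0,1/2). Then for all δ > 0 sufficiently small in terms of ε, there exists A' ⊆ A with |A \ A'| ≤ ε|G| such that |(A'+A') \ S_δ(A)| ≤ ε|G|, where S_δ(A) = {x ∈ A+A : |A ∩ (x−A)| ≥ δ|G|}. -/
open Pointwise

open Finset SimpleGraph SimpleGraph.TripartiteFromTriangles Sum3

private lemma sum_aux {G V : Type} [Fintype G] [DecidableEq G] [DecidableEq V]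
    (D : Finset (Sym2 V)) (f : G → G → Sym2 V)
    (hf : ∀ a x a' x', f a x = f a' x' → a = a' ∧ x = x') (B : Finset G) :
    ∑ a ∈ B, #(univ.filter fun x => f a x ∈ D) ≤ #D := by
  calc ∑ a ∈ B, #(univ.filter fun x => f a x ∈ D)
      = ∑ a ∈ B, #((univ.filter fun x => f a x ∈ D).image (f a)) := by
        refine Finset.sum_congr rfl fun a _ => ?_
        rw [Finset.card_image_of_injective _ fun x x' h => (hf a x a x' h).2]
    _ = #(B.biUnion fun a => (univ.filter fun x => f a x ∈ D).image (f a)) := by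
        rw [Finset.card_biUnion]
        intro a _ a' _ haa'
        simp only [Finset.disjoint_left, Finset.mem_image, Finset.mem_filter]
        rintro e ⟨x, hx, rfl⟩ ⟨x', hx', he⟩
        exact haa' (hf a' x' a x he).1.symm
    _ ≤ #D := by
        apply Finset.card_le_card
        intro e he
        simp only [Finset.mem_biUnion, Finset.mem_image, Finset.mem_filter] at he
        obtain ⟨a, _, x, hx, rfl⟩ := he
        exact hx.2


set_option maxHeartbeats 3200000 in
/-- Popular sums: for `ε ∈ (0,1/2)` and all sufficiently small `δ > 0` (in terms of `ε`),
for any finite abelian `G` and `A ⊆ G` there is `A' ⊆ A` with `|A \ A'| ≤ ε|G|` such that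
`|(A'+A') \ S_δ(A)| ≤ ε|G|`, where `S_δ(A) = {x ∈ A+A : |A ∩ (x−A)| ≥ δ|G|}`. -/
theorem popular_sums (ε : ℝ) (hε0 : 0 < ε) (hε1 : ε < 1 / 2) :
    ∃ δ₀ : ℝ, 0 < δ₀ ∧
    ∀ (G : Type) [AddCommGroup G] [Fintype G], ∀ A : Set G, ∀ δ : ℝ, 0 < δ → δ ≤ δ₀ →
      ∃ A' : Set G, A' ⊆ A ∧ ((A \ A').ncard : ℝ) ≤ ε * Fintype.card G ∧
        ((((A' + A') \
          {x : G | x ∈ A + A ∧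
            δ * (Fintype.card G : ℝ) ≤ ((A ∩ {y : G | x - y ∈ A}).ncard : ℝ)}).ncard : ℝ))
          ≤ ε * Fintype.card G := by
  classical
  set η : ℝ := ε / 54 with hηdef
  have hη0 : 0 < η := by positivity
  have hη1 : η ≤ 1 := by rw [hηdef]; linarith
  refine ⟨triangleRemovalBound η, triangleRemovalBound_pos hη0, ?_⟩
  intro G _ _ A δ hδ0 hδδ₀
  set N := Fintype.card G with hNdef
  have hN0 : 0 < N := Fintype.card_pos
  have hN0' : (0:ℝ) < N := by exact_mod_cast hN0
  set S : Set G := {x : G | x ∈ A + A ∧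
      δ * (N : ℝ) ≤ ((A ∩ {y : G | x - y ∈ A}).ncard : ℝ)} with hSdef
  set U : Set G := (A + A) \ S with hUdef
  -- unpopular sums have few representations
  have hUrep : ∀ s ∈ U, ((A ∩ {y : G | s - y ∈ A}).ncard : ℝ) < δ * N := by
    intro s hs
    by_contra h
    push_neg at h
    exact hs.2 ⟨hs.1, h⟩
  -- the triangle index set
  set P : Finset (G × G) :=
    univ.filter (fun ab => ab.1 ∈ A ∧ ab.2 ∈ A ∧ ab.1 + ab.2 ∈ U) with hPdef
  set t : Finset (G × G × G) :=
    (univ ×ˢ P).image (fun p => (p.1, p.1 + p.2.1, p.1 + p.2.1 + p.2.2)) with htdef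
  have ht_mem : ∀ x y z : G, (x, y, z) ∈ t ↔ y - x ∈ A ∧ z - y ∈ A ∧ z - x ∈ U := by
    intro x y z
    constructor
    · intro h
      simp only [htdef, mem_image, mem_product, mem_univ, true_and, hPdef, mem_filter,
        Prod.ext_iff] at h
      obtain ⟨⟨x', a, b⟩, ⟨ha, hb, hab⟩, rfl, rfl, rfl⟩ := h
      refine ⟨?_, ?_, ?_⟩
      · have e : x' + a - x' = a := by abel
        rw [e]; exact ha
      · have e : x' + a + b - (x' + a) = b := by abel
        rw [e]; exact hb
      · have e : x' + a + b - x' = a + b := by abel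
        rw [e]; exact hab
    · rintro ⟨h1, h2, h3⟩
      rw [htdef]
      apply Finset.mem_image.2
      refine ⟨(x, y - x, z - y), Finset.mem_product.2 ⟨mem_univ _, ?_⟩, ?_⟩
      · rw [hPdef, mem_filter]
        refine ⟨mem_univ _, h1, h2, ?_⟩
        show (y - x) + (z - y) ∈ U
        have e : y - x + (z - y) = z - x := by abel
        rw [e]; exact h3
      · show (x, x + (y - x), x + (y - x) + (z - y)) = (x, y, z)
        have e1 : x + (y - x) = y := by abel
        rw [e1]
        have e2 : y + (z - y) = z := by abel
        rw [e2]
  -- cardinality of t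
  have hP : (#P : ℝ) ≤ δ * N * N := by
    have hmaps : ∀ ab ∈ P, ab.1 + ab.2 ∈ U.toFinset := by
      intro ab hab
      rw [Set.mem_toFinset]
      exact ((mem_filter.1 hab).2).2.2
    rw [Finset.card_eq_sum_card_fiberwise hmaps]
    have hfiber : ∀ s ∈ U.toFinset,
        ((P.filter fun ab => ab.1 + ab.2 = s).card : ℝ) ≤ δ * N := by
      intro s hs
      rw [Set.mem_toFinset] at hs
      have hinj : ((P.filter fun ab => ab.1 + ab.2 = s).card : ℝ)
          ≤ ((A ∩ {y : G | s - y ∈ A}).toFinset.card : ℝ) := by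
        have := Finset.card_le_card_of_injOn (f := Prod.fst)
          (s := P.filter fun ab => ab.1 + ab.2 = s)
          (t := (A ∩ {y : G | s - y ∈ A}).toFinset) ?_ ?_
        · exact_mod_cast this
        · intro ab hab
          simp only [Finset.mem_coe, mem_filter, hPdef, mem_univ, true_and] at hab
          obtain ⟨⟨ha, hb, _⟩, habs⟩ := hab
          rw [Finset.mem_coe, Set.mem_toFinset]
          refine ⟨ha, ?_⟩
          have : s - ab.1 = ab.2 := by rw [← habs]; abel
          simpa [this] using hb
        · intro ab hab ab' hab' h
          simp only [coe_filter, Set.mem_setOf_eq] at hab hab'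
          have : ab.2 = ab'.2 := by
            have h1 := hab.2; have h2 := hab'.2
            rw [h] at h1
            exact by
              have := h1.trans h2.symm
              exact add_left_cancel this
          exact Prod.ext h this
      have hlt := hUrep s hs
      rw [Set.ncard_eq_toFinset_card'] at hlt
      linarith
    calc ((∑ s ∈ U.toFinset, (P.filter fun ab => ab.1 + ab.2 = s).card : ℕ) : ℝ)
        = ∑ s ∈ U.toFinset, ((P.filter fun ab => ab.1 + ab.2 = s).card : ℝ) := by push_cast; rfl
      _ ≤ ∑ _s ∈ U.toFinset, δ * N := Finset.sum_le_sum hfiber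
      _ = (U.toFinset.card : ℝ) * (δ * N) := by rw [Finset.sum_const, nsmul_eq_mul]
      _ ≤ (N : ℝ) * (δ * N) := by
          have : U.toFinset.card ≤ N := by
            simpa [hNdef] using Finset.card_le_univ U.toFinset
          have h' : (U.toFinset.card : ℝ) ≤ N := by exact_mod_cast this
          have : (0:ℝ) ≤ δ * N := by positivity
          nlinarith
      _ = δ * N * N := by ring
  have ht_card : (#t : ℝ) ≤ δ * N ^ 3 := by
    have hinj : Function.Injective (fun p : G × G × G => (p.1, p.1 + p.2.1, p.1 + p.2.1 + p.2.2)) := by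
      rintro ⟨x, a, b⟩ ⟨x', a', b'⟩ h
      simp only [Prod.ext_iff] at h ⊢
      obtain ⟨h1, h2, h3⟩ := h
      subst h1
      have ha : a = a' := add_left_cancel h2
      subst ha
      exact ⟨rfl, rfl, add_left_cancel h3⟩
    rw [htdef, Finset.card_image_of_injective _ hinj, Finset.card_product, card_univ, ← hNdef]
    push_cast
    nlinarith
  -- bound on the number of triangles in the graph
  have hclique : (graph t).cliqueFinset 3 ⊆ t.image toTriangle := by
    intro s hs
    rw [mem_cliqueFinset_iff, is3Clique_iff] at hs
    obtain ⟨x, y, z, hxy, hxz, hyz, rfl⟩ := hs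
    obtain ⟨a, b, c, habc, hab, hac, hbc⟩ := graph_triple hxy hxz hyz
    rw [Graph.in₀₁_iff] at hab
    rw [Graph.in₀₂_iff] at hac
    rw [Graph.in₁₂_iff] at hbc
    obtain ⟨c', hc'⟩ := hab
    obtain ⟨b', hb'⟩ := hac
    obtain ⟨a', ha'⟩ := hbc
    have habc_mem : (a, b, c) ∈ t := by
      rw [ht_mem]
      exact ⟨((ht_mem _ _ _).1 hc').1, ((ht_mem _ _ _).1 ha').2.1, ((ht_mem _ _ _).1 hb').2.2⟩
    rw [← habc]
    exact Finset.mem_image_of_mem _ habc_mem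
  have hcard3 : (Fintype.card (G ⊕ G ⊕ G) : ℝ) = 3 * N := by
    simp only [Fintype.card_sum, ← hNdef]
    push_cast
    ring
  have htri : (#((graph t).cliqueFinset 3) : ℝ)
      < triangleRemovalBound η * (Fintype.card (G ⊕ G ⊕ G) : ℝ) ^ 3 := by
    have h1 : (#((graph t).cliqueFinset 3) : ℝ) ≤ #t := by
      exact_mod_cast (Finset.card_le_card hclique).trans Finset.card_image_le
    have htrb : 0 < triangleRemovalBound η := triangleRemovalBound_pos hη0
    have h2 : (#t : ℝ) ≤ triangleRemovalBound η * N ^ 3 := by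
      refine ht_card.trans ?_
      have : (0:ℝ) < (N:ℝ)^3 := by positivity
      nlinarith
    rw [hcard3]
    have h3 : triangleRemovalBound η * (N:ℝ) ^ 3 < triangleRemovalBound η * (3 * N) ^ 3 := by
      have : (0:ℝ) < (N:ℝ)^3 := by positivity
      nlinarith
    linarith
  obtain ⟨G', hG'le, hdec, hG'card, hG'free⟩ := triangle_removal htri
  -- the deleted edges
  set D : Finset (Sym2 (G ⊕ G ⊕ G)) := (graph t).edgeFinset \ G'.edgeFinset with hDdef
  have hDsub : G'.edgeFinset ⊆ (graph t).edgeFinset := edgeFinset_mono hG'le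
  have hDcard : (#D : ℝ) < η * (3 * N) ^ 2 := by
    rw [hDdef, Finset.card_sdiff_of_subset hDsub]
    rw [Nat.cast_sub (Finset.card_le_card hDsub)]
    calc ((#(graph t).edgeFinset : ℝ) - #G'.edgeFinset)
        < η * ((Fintype.card (G ⊕ G ⊕ G)) ^ 2 : ℕ) := hG'card
      _ = η * (3 * N) ^ 2 := by rw [Nat.cast_pow, hcard3]
  -- membership of deleted edges
  have hDmem : ∀ u v : G ⊕ G ⊕ G, s(u, v) ∈ D ↔ (graph t).Adj u v ∧ ¬ G'.Adj u v := by
    intro u v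
    simp [hDdef, Finset.mem_sdiff, mem_edgeFinset]
  -- bad sets
  set B₁ : Finset G := univ.filter
    (fun a => (N : ℝ) ≤ 3 * #(univ.filter fun x : G => s(in₀ x, in₁ (x + a)) ∈ D)) with hB₁def
  set B₂ : Finset G := univ.filter
    (fun b => (N : ℝ) ≤ 3 * #(univ.filter fun y : G => s(in₁ y, in₂ (y + b)) ∈ D)) with hB₂def
  set B₀ : Finset G := univ.filter
    (fun v => (N : ℝ) ≤ 3 * #(univ.filter fun x : G => s(in₀ x, in₂ (x + v)) ∈ D)) with hB₀def
  -- generic bad-set bound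
  have hbad : ∀ (f : G → G → Sym2 (G ⊕ G ⊕ G)),
      (∀ a x a' x', f a x = f a' x' → a = a' ∧ x = x') →
      ∀ B : Finset G, (∀ a ∈ B, (N : ℝ) ≤ 3 * #(univ.filter fun x => f a x ∈ D)) →
      (N : ℝ) * #B ≤ 3 * #D := by
    intro f hf B hB
    have hsum := sum_aux D f hf B
    calc (N : ℝ) * #B = ∑ _a ∈ B, (N : ℝ) := by rw [Finset.sum_const, nsmul_eq_mul]; ring
      _ ≤ ∑ a ∈ B, 3 * (#(univ.filter fun x => f a x ∈ D) : ℝ) := by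
          refine Finset.sum_le_sum ?_
          intro a ha
          exact_mod_cast hB a ha
      _ = 3 * ((∑ a ∈ B, #(univ.filter fun x => f a x ∈ D) : ℕ) : ℝ) := by
          push_cast; rw [Finset.mul_sum]
      _ ≤ 3 * #D := by
          have : ((∑ a ∈ B, #(univ.filter fun x => f a x ∈ D) : ℕ) : ℝ) ≤ #D := by
            exact_mod_cast hsum
          linarith
  have hf₁ : ∀ a x a' x' : G, s(in₀ x, (in₁ (x + a) : G ⊕ G ⊕ G)) = s(in₀ x', in₁ (x' + a')) →
      a = a' ∧ x = x' := by
    intro a x a' x' h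
    simp [in₀, in₁, Sym2.eq_iff] at h
    obtain ⟨hx, hy⟩ := h
    subst hx
    exact ⟨add_left_cancel hy, rfl⟩
  have hf₂ : ∀ a x a' x' : G, s(in₁ x, (in₂ (x + a) : G ⊕ G ⊕ G)) = s(in₁ x', in₂ (x' + a')) →
      a = a' ∧ x = x' := by
    intro a x a' x' h
    simp [in₁, in₂, Sym2.eq_iff] at h
    obtain ⟨hx, hy⟩ := h
    subst hx
    exact ⟨add_left_cancel hy, rfl⟩
  have hf₀ : ∀ a x a' x' : G, s(in₀ x, (in₂ (x + a) : G ⊕ G ⊕ G)) = s(in₀ x', in₂ (x' + a')) →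
      a = a' ∧ x = x' := by
    intro a x a' x' h
    simp [in₀, in₂, Sym2.eq_iff] at h
    obtain ⟨hx, hy⟩ := h
    subst hx
    exact ⟨add_left_cancel hy, rfl⟩
  have hB₁card : (N : ℝ) * #B₁ ≤ 3 * #D := by
    refine hbad _ (fun a x a' x' h => hf₁ a x a' x' h) B₁ ?_
    intro a ha
    exact (mem_filter.1 ha).2
  have hB₂card : (N : ℝ) * #B₂ ≤ 3 * #D := by
    refine hbad _ (fun a x a' x' h => hf₂ a x a' x' h) B₂ ?_
    intro a ha
    exact (mem_filter.1 ha).2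
  have hB₀card : (N : ℝ) * #B₀ ≤ 3 * #D := by
    refine hbad _ (fun a x a' x' h => hf₀ a x a' x' h) B₀ ?_
    intro a ha
    exact (mem_filter.1 ha).2
  -- define A'
  refine ⟨A \ (↑B₁ ∪ ↑B₂ : Set G), Set.diff_subset, ?_, ?_⟩
  · -- |A \ A'| ≤ ε N
    have hsub : A \ (A \ (↑B₁ ∪ ↑B₂ : Set G)) ⊆ (↑(B₁ ∪ B₂) : Set G) := by
      intro x hx
      obtain ⟨hxA, hx'⟩ := hx
      simp only [Set.mem_diff, not_and, not_not] at hx'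
      simpa using hx' hxA
    have h1 : ((A \ (A \ (↑B₁ ∪ ↑B₂ : Set G))).ncard : ℝ) ≤ #(B₁ ∪ B₂) := by
      have := Set.ncard_le_ncard hsub (Set.toFinite _)
      rw [Set.ncard_coe_finset] at this
      exact_mod_cast this
    have h2 : (#(B₁ ∪ B₂) : ℝ) ≤ #B₁ + #B₂ := by
      exact_mod_cast Finset.card_union_le B₁ B₂
    have h6 : ((#B₁ : ℝ) + #B₂) ≤ ε * N := by
      have h7 : (N : ℝ) * ((#B₁ : ℝ) + #B₂) < (N : ℝ) * (ε * N) := by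
        calc (N : ℝ) * ((#B₁ : ℝ) + #B₂) = (N : ℝ) * #B₁ + (N : ℝ) * #B₂ := by ring
          _ ≤ 6 * #D := by linarith
          _ < 6 * (η * (3 * N) ^ 2) := by linarith
          _ = (N : ℝ) * (ε * N) := by rw [hηdef]; push_cast; ring
      exact (lt_of_mul_lt_mul_left h7 hN0'.le).le
    exact h1.trans (h2.trans h6)
  · -- popularity of sums
    have hkey : ((A \ (↑B₁ ∪ ↑B₂ : Set G)) + (A \ (↑B₁ ∪ ↑B₂ : Set G))) \ S ⊆ (↑B₀ : Set G) := by
      intro v hv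
      obtain ⟨hvsum, hvS⟩ := hv
      rw [Set.mem_add] at hvsum
      obtain ⟨a, ha, b, hb, rfl⟩ := hvsum
      have haA : a ∈ A := ha.1
      have hbA : b ∈ A := hb.1
      have haB : a ∉ B₁ := by
        intro h; exact ha.2 (Set.mem_union_left _ h)
      have hbB : b ∉ B₂ := by
        intro h; exact hb.2 (Set.mem_union_right _ h)
      have hvU : a + b ∈ U := ⟨Set.add_mem_add haA hbA, hvS⟩
      -- all translated triangles are in t
      have htr : ∀ x : G, (x, x + a, x + (a + b)) ∈ t := by
        intro x
        rw [ht_mem]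
        refine ⟨by simpa using haA, ?_, by simpa using hvU⟩
        have : x + (a + b) - (x + a) = b := by abel
        simpa [this] using hbA
      -- for each x, one of the three edges is deleted
      have hdel : ∀ x : G, s(in₀ x, (in₁ (x + a) : G ⊕ G ⊕ G)) ∈ D ∨
          s(in₁ (x + a), (in₂ ((x + a) + b) : G ⊕ G ⊕ G)) ∈ D ∨
          s(in₀ x, (in₂ (x + (a + b)) : G ⊕ G ⊕ G)) ∈ D := by
        intro x
        have hmem := htr x
        have h01 : (graph t).Adj (in₀ x) (in₁ (x + a)) := Graph.in₀₁_iff.2 ⟨_, hmem⟩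
        have h02 : (graph t).Adj (in₀ x) (in₂ (x + (a + b))) := Graph.in₀₂_iff.2 ⟨_, hmem⟩
        have h12 : (graph t).Adj (in₁ (x + a)) (in₂ (x + (a + b))) := Graph.in₁₂_iff.2 ⟨_, hmem⟩
        have hassoc : (x + a) + b = x + (a + b) := by abel
        by_contra h
        push_neg at h
        obtain ⟨hd1, hd2, hd3⟩ := h
        rw [hDmem] at hd1 hd2 hd3
        rw [hassoc] at hd2
        have h1' : G'.Adj (in₀ x) (in₁ (x + a)) := by
          by_contra hc; exact hd1 ⟨h01, hc⟩
        have h2' : G'.Adj (in₁ (x + a)) (in₂ (x + (a + b))) := by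
          by_contra hc; exact hd2 ⟨h12, hc⟩
        have h3' : G'.Adj (in₀ x) (in₂ (x + (a + b))) := by
          by_contra hc; exact hd3 ⟨h02, hc⟩
        exact hG'free _ (is3Clique_triple_iff.2 ⟨h1', h3', h2'⟩)
      -- counting
      set F₁ : Finset G := univ.filter fun x : G => s(in₀ x, (in₁ (x + a) : G ⊕ G ⊕ G)) ∈ D
      set F₂ : Finset G := univ.filter fun x : G =>
        s(in₁ (x + a), (in₂ ((x + a) + b) : G ⊕ G ⊕ G)) ∈ D
      set F₀ : Finset G := univ.filter fun x : G => s(in₀ x, (in₂ (x + (a + b)) : G ⊕ G ⊕ G)) ∈ D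
      have hcover : (univ : Finset G) ⊆ F₁ ∪ F₂ ∪ F₀ := by
        intro x _
        rcases hdel x with h | h | h
        · exact Finset.mem_union_left _ (Finset.mem_union_left _ (mem_filter.2 ⟨mem_univ _, h⟩))
        · exact Finset.mem_union_left _ (Finset.mem_union_right _ (mem_filter.2 ⟨mem_univ _, h⟩))
        · exact Finset.mem_union_right _ (mem_filter.2 ⟨mem_univ _, h⟩)
      have hF₂ : #F₂ = #(univ.filter fun y : G => s(in₁ y, (in₂ (y + b) : G ⊕ G ⊕ G)) ∈ D) := by
        refine Finset.card_bij (fun x _ => x + a) ?_ ?_ ?_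
        · intro x hx
          rw [mem_filter] at hx ⊢
          exact ⟨mem_univ _, hx.2⟩
        · intro x _ x' _ h
          exact add_right_cancel h
        · intro y hy
          refine ⟨y - a, ?_, by show y - a + a = y; abel⟩
          rw [mem_filter] at hy ⊢
          refine ⟨mem_univ _, ?_⟩
          have h1 : y - a + a = y := by abel
          rw [h1]
          exact hy.2
      have hNle : N ≤ #F₁ + #F₂ + #F₀ := by
        calc N = #(univ : Finset G) := by rw [card_univ]
          _ ≤ #(F₁ ∪ F₂ ∪ F₀) := Finset.card_le_card hcover
          _ ≤ #(F₁ ∪ F₂) + #F₀ := Finset.card_union_le _ _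
          _ ≤ #F₁ + #F₂ + #F₀ := by
              have := Finset.card_union_le F₁ F₂
              omega
      have haB' : 3 * (#F₁ : ℝ) < N := by
        by_contra h
        push_neg at h
        exact haB (mem_filter.2 ⟨mem_univ _, h⟩)
      have hbB' : 3 * (#F₂ : ℝ) < N := by
        rw [hF₂]
        by_contra h
        push_neg at h
        exact hbB (mem_filter.2 ⟨mem_univ _, h⟩)
      have hNle' : (N : ℝ) ≤ #F₁ + #F₂ + #F₀ := by exact_mod_cast hNle
      have : (N : ℝ) ≤ 3 * #F₀ := by linarith
      exact Finset.mem_coe.2 (mem_filter.2 ⟨mem_univ _, this⟩)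
    have h1 : ((((A \ (↑B₁ ∪ ↑B₂ : Set G)) + (A \ (↑B₁ ∪ ↑B₂ : Set G))) \ S).ncard : ℝ)
        ≤ #B₀ := by
      have := Set.ncard_le_ncard hkey (Set.toFinite _)
      rw [Set.ncard_coe_finset] at this
      exact_mod_cast this
    clear hkey
    clear_value B₀ D t P
    have h6 : (#B₀ : ℝ) ≤ ε * N := by
      have h7 : (N : ℝ) * (#B₀ : ℝ) < (N : ℝ) * (ε * N) := by
        calc (N : ℝ) * (#B₀ : ℝ) ≤ 3 * #D := hB₀card
          _ < 3 * (η * (3 * N) ^ 2) := by linarith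
          _ = (N : ℝ) * ((ε / 2) * N) := by rw [hηdef]; push_cast; ring
          _ ≤ (N : ℝ) * (ε * N) := by
            have : (0:ℝ) ≤ (N:ℝ) := hN0'.le
            nlinarith
      exact (lt_of_mul_lt_mul_left h7 hN0'.le).le
    exact h1.trans h6
end

section
/- Let G be a finite abelian group and A ⊆ G a subset with |A| > |G|/(ℓ+1) for some positive integer ℓ. Then |A+A| ≥ |G|/ℓ. -/
open Pointwise

section Aux

variable {G : Type} [AddCommGroup G] [Fintype G] [DecidableEq G]

/-- If every translate intersection is large, closure under addition. -/
private lemma aux_claim1 (A S : Finset G) (hcase : 2 * S.card < 3 * A.card)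
    (hAS : A + A ⊆ S) :
    ∀ x ∈ A - A, A.card < 2 * (A ∩ (x +ᵥ A)).card := by
  intro x hx
  rw [Finset.mem_sub] at hx
  obtain ⟨a, ha, b, hb, rfl⟩ := hx
  have h1 : (a +ᵥ A) ∪ (b +ᵥ A) ⊆ S := by
    intro y hy
    rcases Finset.mem_union.mp hy with hy | hy <;>
    · rw [Finset.mem_vadd_finset] at hy
      obtain ⟨c, hc, rfl⟩ := hy
      exact hAS (Finset.add_mem_add (by assumption) hc)
  have hvv : b +ᵥ ((a - b) +ᵥ A) = a +ᵥ A := by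
    ext y
    simp only [Finset.mem_vadd_finset, vadd_eq_add]
    constructor
    · rintro ⟨c, ⟨d, hd, rfl⟩, rfl⟩
      exact ⟨d, hd, by abel⟩
    · rintro ⟨d, hd, rfl⟩
      exact ⟨(a - b) + d, ⟨d, hd, rfl⟩, by abel⟩
  have h2 : (a +ᵥ A) ∩ (b +ᵥ A) = b +ᵥ (A ∩ ((a - b) +ᵥ A)) := by
    rw [Finset.vadd_finset_inter, hvv, Finset.inter_comm]
  have h3 := Finset.card_union_add_card_inter (a +ᵥ A) (b +ᵥ A)
  rw [h2, Finset.card_vadd_finset, Finset.card_vadd_finset, Finset.card_vadd_finset] at h3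
  have h4 : ((a +ᵥ A) ∪ (b +ᵥ A)).card ≤ S.card := Finset.card_le_card h1
  omega

private lemma aux_neg_mem (A : Finset G) : ∀ x ∈ A - A, -x ∈ A - A := by
  intro x hx
  rw [Finset.mem_sub] at hx
  obtain ⟨a, ha, b, hb, rfl⟩ := hx
  rw [neg_sub]
  exact Finset.sub_mem_sub hb ha

private lemma aux_closed (A S : Finset G) (hcase : 2 * S.card < 3 * A.card)
    (hAS : A + A ⊆ S) :
    ∀ x ∈ A - A, ∀ y ∈ A - A, x + y ∈ A - A := by
  intro x hx y hy
  have h1 := aux_claim1 A S hcase hAS x hx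
  have h2 := aux_claim1 A S hcase hAS (-y) (aux_neg_mem A y hy)
  have hsub : (A ∩ (x +ᵥ A)) ∪ (A ∩ ((-y) +ᵥ A)) ⊆ A := by
    intro z hz
    rcases Finset.mem_union.mp hz with hz | hz <;> exact (Finset.mem_inter.mp hz).1
  have h3 := Finset.card_union_add_card_inter (A ∩ (x +ᵥ A)) (A ∩ ((-y) +ᵥ A))
  have h4 := Finset.card_le_card hsub
  have h5 : ((A ∩ (x +ᵥ A)) ∩ (A ∩ ((-y) +ᵥ A))).Nonempty := by
    rw [← Finset.card_pos]; omega
  obtain ⟨e, he⟩ := h5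
  rw [Finset.mem_inter, Finset.mem_inter, Finset.mem_inter] at he
  obtain ⟨⟨-, hex⟩, -, hey⟩ := he
  rw [Finset.mem_vadd_finset] at hex hey
  obtain ⟨f, hf, hfx⟩ := hex
  obtain ⟨g, hg, hgy⟩ := hey
  simp only [vadd_eq_add] at hfx hgy
  have key : x + y = g - f := by
    have h12 : x + f = -y + g := by rw [hfx, hgy]
    have hg2 : g = y + (x + f) := by rw [h12]; abel
    rw [hg2]; abel
  rw [key]
  exact Finset.sub_mem_sub hg hf

end Aux

/-- If `A ⊆ G` with `|A| > |G|/(ℓ+1)` for a positive integer `ℓ`, then `|A+A| ≥ |G|/ℓ`. -/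
theorem kneser_corollary {G : Type} [AddCommGroup G] [Fintype G]
    (A : Set G) (ℓ : ℕ) (hℓ : 1 ≤ ℓ)
    (h : Fintype.card G < (ℓ + 1) * A.ncard) :
    Fintype.card G ≤ ℓ * (A + A).ncard := by
  classical
  -- move to Finsets
  have hAfin : A.Finite := Set.toFinite A
  set F : Finset G := hAfin.toFinset with hF
  have hcoe : (F : Set G) = A := hAfin.coe_toFinset
  have hncard : A.ncard = F.card := by rw [← hcoe, Set.ncard_coe_finset]
  have hncard2 : (A + A).ncard = (F + F).card := by
    rw [← Set.ncard_coe_finset (F + F), Finset.coe_add, hcoe]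
  rw [hncard] at h
  rw [hncard2]
  clear_value F
  clear hncard hncard2 hcoe hF hAfin A
  -- now a pure Finset statement
  have hA0 : 0 < F.card := by
    rcases Nat.eq_zero_or_pos F.card with h0 | h0
    · rw [h0, Nat.mul_zero] at h; omega
    · exact h0
  obtain ⟨a₀, ha₀⟩ := Finset.card_pos.mp hA0
  by_cases hbig : Fintype.card G < 2 * F.card
  · -- A + A = univ
    have huniv : F + F = Finset.univ := by
      ext x
      simp only [Finset.mem_univ, iff_true]
      set B := F.image (fun a => x - a) with hB
      have hBcard : B.card = F.card :=
        Finset.card_image_of_injective _ (fun a b hab => by simpa using hab)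
      have hint : (F ∩ B).Nonempty := by
        rw [← Finset.card_pos]
        have h1 := Finset.card_union_add_card_inter F B
        have h2 : (F ∪ B).card ≤ Fintype.card G := Finset.card_le_univ _
        omega
      obtain ⟨a, ha⟩ := hint
      rw [Finset.mem_inter, hB, Finset.mem_image] at ha
      obtain ⟨haF, b, hbF, hba⟩ := ha
      have : x = a + b := by rw [← hba]; abel
      rw [this]
      exact Finset.add_mem_add haF hbF
    rw [huniv, Finset.card_univ]
    exact Nat.le_mul_of_pos_left _ hℓ
  · push_neg at hbig
    have hℓ2 : 2 ≤ ℓ := by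
      by_contra hc
      push_neg at hc
      interval_cases ℓ <;> omega
    by_cases hcase : 3 * F.card ≤ 2 * (F + F).card
    · have k1 : ℓ * (3 * F.card) ≤ ℓ * (2 * (F + F).card) := Nat.mul_le_mul_left ℓ hcase
      have k2 : 2 * F.card ≤ ℓ * F.card := Nat.mul_le_mul_right F.card hℓ2
      nlinarith [h, k1, k2]
    · push_neg at hcase
      -- |F+F| < (3/2)|F| : Freiman 3/2 argument, H := F - F is a subgroup
      set H : Finset G := F - F with hHdef
      have hAS : F + F ⊆ F + F := Finset.Subset.refl _
      have claim1 := aux_claim1 F (F + F) hcase hAS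
      have hclosed := aux_closed F (F + F) hcase hAS
      have hneg := aux_neg_mem F
      have h0H : (0 : G) ∈ H := by
        rw [show (0 : G) = a₀ - a₀ by rw [sub_self]]
        exact Finset.sub_mem_sub ha₀ ha₀
      -- A ⊆ a₀ +ᵥ H
      have hAsub : F ⊆ a₀ +ᵥ H := by
        intro a ha
        rw [Finset.mem_vadd_finset]
        exact ⟨a - a₀, Finset.sub_mem_sub ha ha₀, by simp⟩
      have hAle : F.card ≤ H.card := by
        calc F.card ≤ (a₀ +ᵥ H).card := Finset.card_le_card hAsub
          _ = H.card := Finset.card_vadd_finset _ _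
      -- double counting : |H| < 2|A|
      have hsum : (F ×ˢ F).card =
          ∑ x ∈ H, ((F ×ˢ F).filter (fun p => p.1 - p.2 = x)).card := by
        apply Finset.card_eq_sum_card_fiberwise
        intro p hp
        rw [Finset.mem_coe, Finset.mem_product] at hp
        exact Finset.sub_mem_sub hp.1 hp.2
      have hfib : ∀ x : G, ((F ×ˢ F).filter (fun p => p.1 - p.2 = x)).card
          = (F ∩ (x +ᵥ F)).card := by
        intro x
        have himg : (F ×ˢ F).filter (fun p => p.1 - p.2 = x)
            = (F ∩ (x +ᵥ F)).image (fun a => (a, a - x)) := by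
          ext p
          simp only [Finset.mem_filter, Finset.mem_product, Finset.mem_image,
            Finset.mem_inter, Finset.mem_vadd_finset, vadd_eq_add]
          constructor
          · rintro ⟨⟨h1, h2⟩, h3⟩
            refine ⟨p.1, ⟨h1, ⟨p.2, h2, (sub_eq_iff_eq_add.mp h3).symm⟩⟩, ?_⟩
            rw [Prod.ext_iff]
            exact ⟨rfl, by rw [← h3, sub_sub_cancel]⟩
          · rintro ⟨a, ⟨ha, b, hb, hab⟩, rfl⟩
            refine ⟨⟨ha, ?_⟩, sub_sub_cancel _ _⟩
            rw [show a - x = b by rw [← hab, add_sub_cancel_left]]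
            exact hb
        rw [himg]
        apply Finset.card_image_of_injective
        intro a b hab
        simpa [Prod.ext_iff] using hab
      have hHlt : H.card * F.card < 2 * F.card * F.card := by
        calc H.card * F.card = ∑ _x ∈ H, F.card := by
              rw [Finset.sum_const, smul_eq_mul]
          _ < ∑ x ∈ H, 2 * ((F ×ˢ F).filter (fun p => p.1 - p.2 = x)).card := by
              apply Finset.sum_lt_sum_of_nonempty ⟨0, h0H⟩
              intro x hx
              rw [hfib]
              exact claim1 x hx
          _ = 2 * (F ×ˢ F).card := by rw [← Finset.mul_sum, ← hsum]
          _ = 2 * F.card * F.card := by rw [Finset.card_product, mul_assoc]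
      have claim3 : H.card < 2 * F.card :=
        lt_of_mul_lt_mul_right hHlt (Nat.zero_le _)
      -- every element of 2a₀ + H is in A + A
      have claim4 : (a₀ + a₀) +ᵥ H ⊆ F + F := by
        intro z hz
        rw [Finset.mem_vadd_finset] at hz
        obtain ⟨hh, hhH, rfl⟩ := hz
        set C : Finset G := F.image (fun u => (a₀ + a₀ + hh) - u) with hC
        have hCcard : C.card = F.card :=
          Finset.card_image_of_injective _ (fun a b hab => by simpa using hab)
        have hCsub : C ⊆ a₀ +ᵥ H := by
          intro c hc
          rw [hC, Finset.mem_image] at hc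
          obtain ⟨u, hu, rfl⟩ := hc
          rw [Finset.mem_vadd_finset]
          refine ⟨hh - (u - a₀), ?_, by simp; abel⟩
          have hu' : u - a₀ ∈ H := Finset.sub_mem_sub hu ha₀
          rw [sub_eq_add_neg]
          exact hclosed _ hhH _ (hneg _ hu')
        have hunion : (F ∪ C).card ≤ H.card := by
          calc (F ∪ C).card ≤ (a₀ +ᵥ H).card :=
                Finset.card_le_card (Finset.union_subset hAsub hCsub)
            _ = H.card := Finset.card_vadd_finset _ _
        have hint : (F ∩ C).Nonempty := by
          rw [← Finset.card_pos]
          have h1 := Finset.card_union_add_card_inter F C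
          omega
        obtain ⟨u, hu⟩ := hint
        rw [Finset.mem_inter, hC, Finset.mem_image] at hu
        obtain ⟨huF, v, hvF, hvu⟩ := hu
        have : (a₀ + a₀) +ᵥ hh = u + v := by
          rw [vadd_eq_add, ← hvu]; abel
        rw [this]
        exact Finset.add_mem_add huF hvF
      have claim5 : H.card ≤ (F + F).card := by
        calc H.card = ((a₀ + a₀) +ᵥ H).card := (Finset.card_vadd_finset _ _).symm
          _ ≤ (F + F).card := Finset.card_le_card claim4
      -- H is a subgroup, so its card divides |G|
      let K : AddSubgroup G :=
        { carrier := ↑H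
          add_mem' := fun {a b} ha hb => hclosed a ha b hb
          zero_mem' := h0H
          neg_mem' := fun {a} ha => hneg a ha }
      have hKcard : Nat.card K = H.card := by
        calc Nat.card K = Nat.card (K : Set G) := by rw [SetLike.coe_sort_coe]
          _ = (K : Set G).ncard := Nat.card_coe_set_eq _
          _ = H.card := by
              show (↑H : Set G).ncard = H.card
              rw [Set.ncard_coe_finset]
      have hdvd : Nat.card K ∣ Nat.card G := AddSubgroup.card_addSubgroup_dvd_card K
      rw [hKcard, Nat.card_eq_fintype_card] at hdvd
      obtain ⟨d, hd⟩ := hdvd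
      have hHpos : 0 < H.card := lt_of_lt_of_le hA0 hAle
      have hd_le : d ≤ ℓ := by
        by_contra hdc
        push_neg at hdc
        have : (ℓ + 1) * H.card ≤ H.card * d := by
          rw [mul_comm H.card d]
          exact Nat.mul_le_mul_right H.card hdc
        have h2 : Fintype.card G < (ℓ + 1) * H.card :=
          lt_of_lt_of_le h (Nat.mul_le_mul_left _ hAle)
        omega
      calc Fintype.card G = H.card * d := hd
        _ ≤ H.card * ℓ := Nat.mul_le_mul_left _ hd_le
        _ = ℓ * H.card := mul_comm _ _
        _ ≤ ℓ * (F + F).card := Nat.mul_le_mul_left _ claim5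
end

section
/- Let p be prime and f, g : F_p → ℂ 1-bounded functions such that Σ_{r∈F_p} |f̂(r)| ≤ K (additive Fourier coefficients) and Σ_{χ mod p} |ĝ(χ)| ≤ K (multiplicative Fourier coefficients) for some K ≥ 2. Then E_{n∈F_p} f(n)·conj(g(n)) = (E f)·conj(E g) + O(K² p^{−1/2}). -/
open Finset BigOperators Pointwise

section ZModDefs
variable (p : ℕ) [Fact (Nat.Prime p)]

/-- The standard additive character `e_p(x) = e^{2πi x/p}` of `F_p`. -/
noncomputable def ep (x : ZMod p) : ℂ :=
  Complex.exp (2 * Real.pi * Complex.I * (x.val : ℂ) / (p : ℂ))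

/-- Additive Fourier coefficient: `f̂(r) = 𝔼_n f(n) e^{-2πi r n/p}`. -/
noncomputable def addDft (f : ZMod p → ℂ) (r : ZMod p) : ℂ :=
  (p : ℂ)⁻¹ * ∑ n : ZMod p, f n * (starRingEnd ℂ) (ep p (r * n))

/-- Multiplicative Fourier coefficient with respect to a Dirichlet character mod `p`:
`f̂(χ) = (p-1)⁻¹ ∑_{n ∈ F_p^×} f(n) conj(χ(n))`. -/
noncomputable def mulDft (f : ZMod p → ℂ) (χ : DirichletCharacter ℂ p) : ℂ :=
  ((p : ℂ) - 1)⁻¹ * ∑ n : (ZMod p)ˣ, f n * (starRingEnd ℂ) (χ n)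

/-- ℓ¹ norm of the additive Fourier transform. -/
noncomputable def addL1Fourier (f : ZMod p → ℂ) : ℝ :=
  ∑ r : ZMod p, ‖addDft p f r‖

/-- ℓ¹ norm of the multiplicative Fourier transform. -/
noncomputable def mulL1Fourier (f : ZMod p → ℂ) : ℝ :=
  letI : Fintype (DirichletCharacter ℂ p) := Fintype.ofFinite _
  ∑ χ : DirichletCharacter ℂ p, ‖mulDft p f χ‖

/-- 1-boundedness. -/
def Bdd1 (f : ZMod p → ℂ) : Prop := ∀ x, ‖f x‖ ≤ 1

/-- Normalized L² norm over the additive group `F_p`. -/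
noncomputable def addL2 (f : ZMod p → ℂ) : ℝ :=
  Real.sqrt ((p : ℝ)⁻¹ * ∑ x : ZMod p, ‖f x‖ ^ 2)

/-- Normalized L² norm over the multiplicative group `F_p^×`. -/
noncomputable def mulL2 (f : ZMod p → ℂ) : ℝ :=
  Real.sqrt (((p : ℝ) - 1)⁻¹ * ∑ x : (ZMod p)ˣ, ‖f x‖ ^ 2)

/-- A growth function: increasing and positive on `ℝ_{>0}`. -/
def GrowthFn' (F : ℝ → ℝ) : Prop :=
  MonotoneOn F (Set.Ioi 0) ∧ ∀ M > 0, 0 < F M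

/-- A set `A ⊆ F_p` is additively 1-measurable with growth `F`. -/
def AddMeasSet1 (A : Set (ZMod p)) (F : ℝ → ℝ) : Prop :=
  ∀ M > 0, ∃ g : ZMod p → ℂ, Bdd1 p g ∧ addL1Fourier p g ≤ F M ∧
    addL2 p (fun x => (A.indicator (fun _ => (1 : ℂ)) x) - g x) ≤ M⁻¹

/-- A set `B ⊆ F_p` is multiplicatively 1-measurable with growth `F`
(viewed on `F_p^×`, ignoring the value at `0`). -/
def MulMeasSet1 (B : Set (ZMod p)) (F : ℝ → ℝ) : Prop :=
  ∀ M > 0, ∃ g : ZMod p → ℂ, Bdd1 p g ∧ mulL1Fourier p g ≤ F M ∧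
    mulL2 p (fun x => (B.indicator (fun _ => (1 : ℂ)) x) - g x) ≤ M⁻¹

end ZModDefs


section AuxOrth
open Finset
variable (p : ℕ) [Fact (Nat.Prime p)]

private lemma ep_eq (x : ZMod p) : ep p x = ZMod.stdAddChar x := by
  have h := ZMod.stdAddChar_coe (N := p) (x.val : ℤ)
  rw [show (((x.val : ℤ) : ZMod p)) = x by push_cast; simp [ZMod.natCast_val, ZMod.cast_id]] at h
  rw [ep, h]; push_cast; ring_nf

private lemma abs_std (x : ZMod p) : ‖ZMod.stdAddChar x‖ = 1 := by
  rw [ZMod.stdAddChar_apply]; exact Circle.norm_coe _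

private lemma conj_std (x : ZMod p) :
    (starRingEnd ℂ) (ZMod.stdAddChar x) = ZMod.stdAddChar (-x) := by
  rw [AddChar.map_neg_eq_inv, ← Complex.inv_eq_conj (abs_std p x)]

private lemma sum_orth (b : ZMod p) :
    ∑ x : ZMod p, ZMod.stdAddChar (x * b) = if b = 0 then (p : ℂ) else 0 := by
  classical
  simpa [ZMod.card] using AddChar.sum_mulShift b (ZMod.isPrimitive_stdAddChar p)

private lemma add_inversion (f : ZMod p → ℂ) (n : ZMod p) :
    ∑ r : ZMod p, addDft p f r * ZMod.stdAddChar (r * n) = f n := by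
  classical
  have hp0 : (p : ℂ) ≠ 0 := by
    exact_mod_cast (Fact.out : p.Prime).ne_zero
  have step : ∀ r : ZMod p, addDft p f r * ZMod.stdAddChar (r * n)
      = (p : ℂ)⁻¹ * ∑ m : ZMod p, f m * ZMod.stdAddChar (r * (n - m)) := by
    intro r
    rw [addDft, mul_assoc, Finset.sum_mul]
    congr 1
    refine Finset.sum_congr rfl fun m _ => ?_
    rw [ep_eq, conj_std, mul_assoc, ← AddChar.map_add_eq_mul]
    congr 2
    ring
  simp_rw [step, ← Finset.mul_sum]
  rw [Finset.sum_comm]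
  have inner : ∀ m : ZMod p, ∑ r : ZMod p, f m * ZMod.stdAddChar (r * (n - m))
      = f m * (if n - m = 0 then (p : ℂ) else 0) := by
    intro m
    rw [← Finset.mul_sum, sum_orth]
  simp_rw [inner, sub_eq_zero, mul_ite, mul_zero]
  rw [Finset.sum_ite_eq Finset.univ n (fun m => f m * (p : ℂ))]
  simp only [Finset.mem_univ, if_true]
  field_simp

private lemma hp1 : ((p : ℂ) - 1) ≠ 0 := by
  have h : (p : ℂ) ≠ 1 := by exact_mod_cast (Fact.out : p.Prime).ne_one
  exact sub_ne_zero.mpr h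

private lemma mul_inversion (g : ZMod p → ℂ) (u : (ZMod p)ˣ) :
    ∑ χ : DirichletCharacter ℂ p, mulDft p g χ * χ u = g u := by
  classical
  have step : ∀ χ : DirichletCharacter ℂ p, mulDft p g χ * χ u
      = ((p : ℂ) - 1)⁻¹ * ∑ v : (ZMod p)ˣ, g v * χ ((v⁻¹ * u : (ZMod p)ˣ) : ZMod p) := by
    intro χ
    rw [mulDft, mul_assoc, Finset.sum_mul]
    congr 1
    refine Finset.sum_congr rfl fun v _ => ?_
    rw [mul_assoc]
    congr 1
    rw [show (starRingEnd ℂ) (χ v) = star (χ v) from rfl, MulChar.star_apply',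
      MulChar.inv_apply, Ring.inverse_unit, ← map_mul, ← Units.val_mul]
  simp_rw [step, ← Finset.mul_sum]
  rw [Finset.sum_comm]
  have inner : ∀ v : (ZMod p)ˣ,
      ∑ χ : DirichletCharacter ℂ p, g v * χ ((v⁻¹ * u : (ZMod p)ˣ) : ZMod p)
      = g v * (if v = u then ((p : ℂ) - 1) else 0) := by
    intro v
    rw [← Finset.mul_sum, DirichletCharacter.sum_characters_eq]
    have hcond : (((v⁻¹ * u : (ZMod p)ˣ) : ZMod p) = 1) ↔ v = u := by
      rw [Units.val_eq_one, inv_mul_eq_one]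
    simp only [hcond]
    congr 1
    rw [Nat.totient_prime (Fact.out : p.Prime), Nat.cast_sub (Fact.out : p.Prime).one_le,
      Nat.cast_one]
  simp_rw [inner, mul_ite, mul_zero]
  rw [Finset.sum_ite_eq' Finset.univ u (fun v => g ↑v * ((p : ℂ) - 1))]
  simp only [Finset.mem_univ, if_true]
  field_simp [hp1 p]

private lemma mul_inversion_conj (g : ZMod p → ℂ) (u : (ZMod p)ˣ) :
    ∑ χ : DirichletCharacter ℂ p,
      (starRingEnd ℂ) (mulDft p g χ) * (starRingEnd ℂ) (χ u) = (starRingEnd ℂ) (g u) := by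
  have h := congrArg (starRingEnd ℂ) (mul_inversion p g u)
  rw [map_sum] at h
  simpa [map_mul] using h

private lemma mul_expand (g : ZMod p → ℂ) (r : ZMod p) :
    ∑ u : (ZMod p)ˣ, ZMod.stdAddChar (r * (u : ZMod p)) * (starRingEnd ℂ) (g u)
      = ∑ χ : DirichletCharacter ℂ p, (starRingEnd ℂ) (mulDft p g χ)
          * ∑ u : (ZMod p)ˣ, ZMod.stdAddChar (r * (u : ZMod p)) * (starRingEnd ℂ) (χ u) := by
  have h : ∀ u : (ZMod p)ˣ, ZMod.stdAddChar (r * (u : ZMod p)) * (starRingEnd ℂ) (g u)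
      = ∑ χ : DirichletCharacter ℂ p,
          ZMod.stdAddChar (r * (u : ZMod p))
            * ((starRingEnd ℂ) (mulDft p g χ) * (starRingEnd ℂ) (χ u)) := by
    intro u
    rw [← Finset.mul_sum, mul_inversion_conj]
  simp_rw [h]
  rw [Finset.sum_comm]
  refine Finset.sum_congr rfl fun χ _ => ?_
  rw [Finset.mul_sum]
  refine Finset.sum_congr rfl fun u _ => ?_
  ring

private lemma sum_split (h : ZMod p → ℂ) :
    ∑ n : ZMod p, h n = h 0 + ∑ u : (ZMod p)ˣ, h u := by
  classical
  rw [← Finset.add_sum_erase Finset.univ h (Finset.mem_univ (0 : ZMod p))]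
  congr 1
  have e1 : ∑ u : (ZMod p)ˣ, h ↑u = ∑ a : {a : ZMod p // a ≠ 0}, h ↑a :=
    Fintype.sum_equiv unitsEquivNeZero _ _ (fun u => by simp)
  rw [e1, ← Finset.sum_subtype (Finset.univ.erase (0 : ZMod p)) (fun x => by simp) h]

private lemma abs_mulchar {χ : MulChar (ZMod p) ℂ} (u : (ZMod p)ˣ) :
    ‖χ u‖ = 1 := by
  have h1 : χ u * (starRingEnd ℂ) (χ u) = 1 := by
    rw [show (starRingEnd ℂ) (χ u) = star (χ u) from rfl, MulChar.star_apply',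
      ← MulChar.mul_apply, mul_inv_cancel, MulChar.one_apply_coe]
  have h2 := congrArg (‖·‖) h1
  rw [norm_mul, Complex.norm_conj, norm_one] at h2
  nlinarith [norm_nonneg (χ u)]

private lemma abs_gauss {χ : MulChar (ZMod p) ℂ} (hχ : χ ≠ 1) :
    ‖gaussSum χ (ZMod.stdAddChar (N := p))‖ = Real.sqrt p := by
  have hc : (starRingEnd ℂ) (gaussSum χ (ZMod.stdAddChar (N := p)))
      = gaussSum χ⁻¹ ((ZMod.stdAddChar (N := p))⁻¹) := by
    rw [gaussSum, gaussSum, map_sum]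
    refine Finset.sum_congr rfl fun a _ => ?_
    rw [map_mul, show (starRingEnd ℂ) (χ a) = star (χ a) from rfl,
      MulChar.star_apply', AddChar.inv_apply', ← Complex.inv_eq_conj (abs_std p a)]
  have key : gaussSum χ (ZMod.stdAddChar (N := p))
      * (starRingEnd ℂ) (gaussSum χ (ZMod.stdAddChar (N := p))) = (p : ℂ) := by
    rw [hc]
    simpa [ZMod.card] using gaussSum_mul_gaussSum_eq_card hχ (ZMod.isPrimitive_stdAddChar p)
  rw [Complex.mul_conj] at key
  have h2 : Complex.normSq (gaussSum χ (ZMod.stdAddChar (N := p))) = (p : ℝ) := by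
    exact_mod_cast key
  rw [Complex.norm_def, h2]

private lemma abs_gauss_shift {χ : MulChar (ZMod p) ℂ} (hχ : χ ≠ 1) (r : (ZMod p)ˣ) :
    ‖gaussSum χ ((ZMod.stdAddChar (N := p)).mulShift r)‖ = Real.sqrt p := by
  have h := congrArg (‖·‖) (gaussSum_mulShift χ (ZMod.stdAddChar (N := p)) r)
  rwa [norm_mul, abs_mulchar, one_mul, abs_gauss p hχ] at h

private lemma one_le_sqrt_p : (1 : ℝ) ≤ Real.sqrt p := by
  rw [show (1:ℝ) = Real.sqrt 1 by simp]
  exact Real.sqrt_le_sqrt (by exact_mod_cast (Fact.out : p.Prime).one_le)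

private lemma abs_G_le (χ : DirichletCharacter ℂ p) (r : (ZMod p)ˣ) :
    ‖∑ u : (ZMod p)ˣ,
        ZMod.stdAddChar ((r : ZMod p) * (u : ZMod p)) * (starRingEnd ℂ) (χ u)‖
      ≤ Real.sqrt p := by
  rcases eq_or_ne χ 1 with h1 | h1
  · subst h1
    have hs : ∀ u : (ZMod p)ˣ,
        ZMod.stdAddChar ((r : ZMod p) * (u : ZMod p))
          * (starRingEnd ℂ) ((1 : DirichletCharacter ℂ p) u)
        = ZMod.stdAddChar ((r : ZMod p) * (u : ZMod p)) := by
      intro u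
      rw [MulChar.one_apply_coe, map_one, mul_one]
    rw [Finset.sum_congr rfl fun u _ => hs u]
    have hsplit := sum_split p (fun n => ZMod.stdAddChar ((r : ZMod p) * n))
    have horth : ∑ n : ZMod p, ZMod.stdAddChar ((r : ZMod p) * n) = 0 := by
      have h := sum_orth p (r : ZMod p)
      simp only [Units.ne_zero r, if_false] at h
      rw [← h]
      exact Finset.sum_congr rfl fun x _ => by rw [mul_comm]
    rw [horth, mul_zero, AddChar.map_zero_eq_one] at hsplit
    have h2 : ∑ u : (ZMod p)ˣ, ZMod.stdAddChar ((r : ZMod p) * (u : ZMod p)) = -1 := by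
      linear_combination -hsplit
    rw [h2]
    simpa using one_le_sqrt_p p
  · have hstar : star χ ≠ 1 := by
      intro h
      apply h1
      have h2 := congrArg star h
      rwa [star_star, star_one] at h2
    have hgs : ∑ u : (ZMod p)ˣ,
        ZMod.stdAddChar ((r : ZMod p) * (u : ZMod p)) * (starRingEnd ℂ) (χ u)
        = gaussSum (star χ) ((ZMod.stdAddChar (N := p)).mulShift r) := by
      rw [gaussSum]
      rw [sum_split p (fun a => (star χ) a * (ZMod.stdAddChar (N := p)).mulShift (r : ZMod p) a)]
      have hz : (star χ) (0 : ZMod p) = 0 := by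
        rw [MulChar.star_apply]
        rw [MulChar.map_nonunit χ not_isUnit_zero]
        exact star_zero ℂ
      rw [hz, zero_mul, zero_add]
      refine Finset.sum_congr rfl fun u _ => ?_
      rw [AddChar.mulShift_apply, MulChar.star_apply, mul_comm]
      rfl
    rw [hgs, abs_gauss_shift p hstar r]

private lemma mulL1_eq (g : ZMod p → ℂ) :
    mulL1Fourier p g = ∑ χ : DirichletCharacter ℂ p, ‖mulDft p g χ‖ := by
  unfold mulL1Fourier
  congr!

end AuxOrth

/-- If `f, g : F_p → ℂ` are 1-bounded with additive Fourier ℓ¹ norm of `f` and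
multiplicative Fourier ℓ¹ norm of `g` both at most `K ≥ 2`, then
`𝔼 f·conj(g) = (𝔼 f)·conj(𝔼 g) + O(K² p^{-1/2})`. -/
theorem additive_multiplicative_orthogonality :
    ∃ C : ℝ, 0 < C ∧
    ∀ (p : ℕ) [Fact (Nat.Prime p)], ∀ f g : ZMod p → ℂ, Bdd1 p f → Bdd1 p g →
    ∀ K : ℝ, 2 ≤ K → addL1Fourier p f ≤ K → mulL1Fourier p g ≤ K →
      ‖(p : ℂ)⁻¹ * (∑ n : ZMod p, f n * (starRingEnd ℂ) (g n))
          - ((p : ℂ)⁻¹ * ∑ n : ZMod p, f n) *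
            (starRingEnd ℂ) ((p : ℂ)⁻¹ * ∑ n : ZMod p, g n)‖
        ≤ C * K ^ 2 / Real.sqrt p := by
  refine ⟨2, by norm_num, ?_⟩
  intro p _ f g hf hg K hK hfK hgK
  classical
  have hppos : (0:ℝ) < p := by
    exact_mod_cast (Fact.out : p.Prime).pos
  have hsq : (0:ℝ) < Real.sqrt p := Real.sqrt_pos.mpr hppos
  have hs1 : (1:ℝ) ≤ Real.sqrt p := one_le_sqrt_p p
  have hK0 : (0:ℝ) < K := lt_of_lt_of_le (by norm_num) hK
  set T : ZMod p → ℂ := fun r =>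
    (p:ℂ)⁻¹ * ∑ n : ZMod p, ZMod.stdAddChar (r * n) * (starRingEnd ℂ) (g n) with hT
  have step1 : (p:ℂ)⁻¹ * ∑ n : ZMod p, f n * (starRingEnd ℂ) (g n)
      = ∑ r : ZMod p, addDft p f r * T r := by
    have hrw : ∀ r : ZMod p, addDft p f r * T r
        = (p:ℂ)⁻¹ * ∑ n : ZMod p, (addDft p f r * ZMod.stdAddChar (r * n))
            * (starRingEnd ℂ) (g n) := by
      intro r
      simp only [hT]
      rw [Finset.mul_sum, Finset.mul_sum, Finset.mul_sum]
      refine Finset.sum_congr rfl fun n _ => ?_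
      ring
    simp_rw [hrw]
    rw [← Finset.mul_sum, Finset.sum_comm]
    congr 1
    refine Finset.sum_congr rfl fun n _ => ?_
    rw [← Finset.sum_mul, add_inversion]
  have h00 : addDft p f 0 = (p:ℂ)⁻¹ * ∑ n : ZMod p, f n := by
    rw [addDft]
    congr 1
    refine Finset.sum_congr rfl fun n _ => ?_
    rw [zero_mul, ep_eq, AddChar.map_zero_eq_one, map_one, mul_one]
  have hT0 : T 0 = (starRingEnd ℂ) ((p:ℂ)⁻¹ * ∑ n : ZMod p, g n) := by
    simp only [hT]
    rw [map_mul, map_sum, map_inv₀, Complex.conj_natCast]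
    congr 1
    refine Finset.sum_congr rfl fun n _ => ?_
    rw [zero_mul, AddChar.map_zero_eq_one, one_mul]
  have split : addDft p f 0 * T 0 + ∑ r ∈ Finset.univ.erase (0 : ZMod p), addDft p f r * T r
      = ∑ r : ZMod p, addDft p f r * T r :=
    Finset.add_sum_erase Finset.univ (fun r => addDft p f r * T r) (Finset.mem_univ (0 : ZMod p))
  have hexpr : (p : ℂ)⁻¹ * (∑ n : ZMod p, f n * (starRingEnd ℂ) (g n))
          - ((p : ℂ)⁻¹ * ∑ n : ZMod p, f n) *
            (starRingEnd ℂ) ((p : ℂ)⁻¹ * ∑ n : ZMod p, g n)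
      = ∑ r ∈ Finset.univ.erase (0 : ZMod p), addDft p f r * T r := by
    rw [step1, ← split, h00, hT0]
    ring
  rw [hexpr]
  have hTbound : ∀ r ∈ Finset.univ.erase (0 : ZMod p),
      ‖T r‖ ≤ (p:ℝ)⁻¹ * (1 + K * Real.sqrt p) := by
    intro r hr
    have hrne : r ≠ 0 := (Finset.mem_erase.mp hr).1
    have hu : IsUnit r := isUnit_iff_ne_zero.mpr hrne
    simp only [hT]
    rw [norm_mul, norm_inv, Complex.norm_natCast]
    refine mul_le_mul_of_nonneg_left ?_ (by positivity)
    rw [sum_split p (fun n => ZMod.stdAddChar (r * n) * (starRingEnd ℂ) (g n))]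
    have h0term : ZMod.stdAddChar (r * (0 : ZMod p)) * (starRingEnd ℂ) (g 0)
        = (starRingEnd ℂ) (g 0) := by
      rw [mul_zero, AddChar.map_zero_eq_one, one_mul]
    rw [h0term, mul_expand p g r]
    refine le_trans (norm_add_le _ _) ?_
    have h1 : ‖(starRingEnd ℂ) (g 0)‖ ≤ 1 := by
      rw [Complex.norm_conj]; exact hg 0
    have h2 : ‖∑ χ : DirichletCharacter ℂ p, (starRingEnd ℂ) (mulDft p g χ)
          * ∑ u : (ZMod p)ˣ, ZMod.stdAddChar (r * (u : ZMod p)) * (starRingEnd ℂ) (χ u)‖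
        ≤ K * Real.sqrt p := by
      refine le_trans (norm_sum_le _ _) ?_
      have hterm : ∀ χ : DirichletCharacter ℂ p,
          ‖(starRingEnd ℂ) (mulDft p g χ)
            * ∑ u : (ZMod p)ˣ, ZMod.stdAddChar (r * (u : ZMod p)) * (starRingEnd ℂ) (χ u)‖
          ≤ ‖mulDft p g χ‖ * Real.sqrt p := by
        intro χ
        rw [norm_mul, Complex.norm_conj]
        refine mul_le_mul_of_nonneg_left ?_ (norm_nonneg _)
        have h3 := abs_G_le p χ hu.unit
        rw [IsUnit.unit_spec] at h3
        exact h3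
      refine le_trans (Finset.sum_le_sum fun χ _ => hterm χ) ?_
      rw [← Finset.sum_mul]
      refine mul_le_mul_of_nonneg_right ?_ (Real.sqrt_nonneg _)
      rw [← mulL1_eq]
      exact hgK
    linarith
  have habs : ‖∑ r ∈ Finset.univ.erase (0 : ZMod p), addDft p f r * T r‖
      ≤ K * ((p:ℝ)⁻¹ * (1 + K * Real.sqrt p)) := by
    refine le_trans (norm_sum_le _ _) ?_
    have hle : ∀ r ∈ Finset.univ.erase (0 : ZMod p),
        ‖addDft p f r * T r‖
          ≤ ‖addDft p f r‖ * ((p:ℝ)⁻¹ * (1 + K * Real.sqrt p)) := by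
      intro r hr
      rw [norm_mul]
      exact mul_le_mul_of_nonneg_left (hTbound r hr) (norm_nonneg _)
    refine le_trans (Finset.sum_le_sum hle) ?_
    rw [← Finset.sum_mul]
    have hBnn : (0:ℝ) ≤ (p:ℝ)⁻¹ * (1 + K * Real.sqrt p) := by positivity
    refine mul_le_mul_of_nonneg_right ?_ hBnn
    refine le_trans ?_ hfK
    rw [addL1Fourier]
    exact Finset.sum_le_sum_of_subset_of_nonneg (Finset.subset_univ _)
      (fun i _ _ => norm_nonneg _)
  refine le_trans habs ?_
  have hps : Real.sqrt p * Real.sqrt p = (p:ℝ) := Real.mul_self_sqrt (le_of_lt hppos)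
  have hKs : 1 ≤ K * Real.sqrt p := by nlinarith
  rw [mul_comm ((p:ℝ)⁻¹) _, ← mul_assoc, ← div_eq_mul_inv, div_le_div_iff₀ hppos hsq]
  nlinarith [mul_pos hK0 hsq, mul_pos (mul_pos hK0 hsq) hsq]
end
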